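/- arXiv:2510.20604 — 4 statements merged into one kernel-verified Lean document; each statement's English description precedes it below -/
import Mathlib

section
/- Let G be a connected undirected simple graph on n ≥ 2 vertices with adjacency matrix A, degree matrix D, Laplacian L = D − A, and normalized Laplacian 𝓛 = D^{-1/2} L D^{-1/2}. Fix two distinct vertices u and v, let X be the Moore–Penrose pseudoinverse of 𝓛, and let 𝓛_v be the principal submatrix of 𝓛 obtained by deleting the row and column indexed by v (which is invertible). Then X_{uu} = (𝓛_v^{-1})_{uu} − (d_u/d_v)·X_{vv} + 2·(√d_u/√d_v)·X_{uv}, where d_u and d_v are the degrees of u and v. -/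
open Matrix

private lemma mp_unique {m : Type*} [Fintype m] [DecidableEq m]
    (M X Y : Matrix m m ℝ)
    (hX1 : M * X * M = M) (hX2 : X * M * X = X)
    (hX3 : (M * X)ᵀ = M * X) (hX4 : (X * M)ᵀ = X * M)
    (hY1 : M * Y * M = M) (hY2 : Y * M * Y = Y)
    (hY3 : (M * Y)ᵀ = M * Y) (hY4 : (Y * M)ᵀ = Y * M) : X = Y := by
  have hMX : M * X = M * Y := by
    calc M * X = (M * Y * M) * X := by rw [hY1]
    _ = (M * Y) * (M * X) := by simp only [Matrix.mul_assoc]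
    _ = (M * Y)ᵀ * (M * X)ᵀ := by rw [hY3, hX3]
    _ = ((M * X) * (M * Y))ᵀ := by rw [← Matrix.transpose_mul]
    _ = ((M * X * M) * Y)ᵀ := by simp only [Matrix.mul_assoc]
    _ = (M * Y)ᵀ := by rw [hX1]
    _ = M * Y := hY3
  have hXM : X * M = Y * M := by
    calc X * M = X * (M * Y * M) := by rw [hY1]
    _ = (X * M) * (Y * M) := by simp only [Matrix.mul_assoc]
    _ = (X * M)ᵀ * (Y * M)ᵀ := by rw [hX4, hY4]
    _ = ((Y * M) * (X * M))ᵀ := by rw [← Matrix.transpose_mul]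
    _ = (Y * (M * X * M))ᵀ := by simp only [Matrix.mul_assoc]
    _ = (Y * M)ᵀ := by rw [hX1]
    _ = Y * M := hY4
  calc X = X * M * X := hX2.symm
  _ = X * (M * Y) := by rw [Matrix.mul_assoc, hMX]
  _ = (X * M) * Y := by rw [Matrix.mul_assoc]
  _ = Y * M * Y := by rw [hXM]
  _ = Y := hY2

/-- Theorem 3.1 of the paper, matrix form.
For a connected simple graph `G` on `n ≥ 2` vertices with adjacency matrix `A`,
degree matrix `D`, Laplacian `L = D - A` and normalized Laplacian
`𝓛 = D^{-1/2} L D^{-1/2}`, if `X` is the Moore–Penrose pseudoinverse of `𝓛`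
and `𝓛_v` the principal submatrix of `𝓛` deleting row and column `v`, then
`X_{uu} = (𝓛_v⁻¹)_{uu} - (d_u/d_v) X_{vv} + 2 (√d_u/√d_v) X_{uv}`. -/
theorem stmt_0
    (n : ℕ) (hn : 2 ≤ n)
    (G : SimpleGraph (Fin n)) [DecidableRel G.Adj] (hG : G.Connected)
    (u v : Fin n) (huv : u ≠ v)
    (A D Dhi L NL X : Matrix (Fin n) (Fin n) ℝ)
    (hA : A = G.adjMatrix ℝ)
    (hD : D = Matrix.diagonal fun i => (G.degree i : ℝ))
    (hDhi : Dhi = Matrix.diagonal fun i => (Real.sqrt (G.degree i))⁻¹)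
    (hL : L = D - A)
    (hNL : NL = Dhi * L * Dhi)
    (hX1 : NL * X * NL = NL) (hX2 : X * NL * X = X)
    (hX3 : (NL * X)ᵀ = NL * X) (hX4 : (X * NL)ᵀ = X * NL) :
    X u u =
      (NL.submatrix (fun i : {w : Fin n // w ≠ v} => (i : Fin n))
          (fun j : {w : Fin n // w ≠ v} => (j : Fin n)))⁻¹ ⟨u, huv⟩ ⟨u, huv⟩
        - ((G.degree u : ℝ) / (G.degree v : ℝ)) * X v v
        + 2 * (Real.sqrt (G.degree u) / Real.sqrt (G.degree v)) * X u v := by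
  classical
  set M := NL.submatrix (fun i : {w : Fin n // w ≠ v} => (i : Fin n))
      (fun j : {w : Fin n // w ≠ v} => (j : Fin n)) with hM
  set r : ℝ := Real.sqrt (G.degree u) / Real.sqrt (G.degree v) with hr
  set s : Fin n → ℝ := fun i => Real.sqrt (G.degree i) with hs_def
  -- degrees are positive
  have hdeg : ∀ i, 0 < G.degree i := by
    intro i
    rw [G.degree_pos_iff_exists_adj]
    have hcard : 1 < Fintype.card (Fin n) := by rw [Fintype.card_fin]; omega
    obtain ⟨j, hj⟩ := Fintype.exists_ne_of_one_lt_card hcard i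
    obtain ⟨p⟩ := hG.preconnected i j
    exact ⟨p.getVert 1, p.adj_snd (SimpleGraph.Walk.not_nil_of_ne hj.symm)⟩
  have hs : ∀ i, 0 < s i := fun i => Real.sqrt_pos.2 (by exact_mod_cast hdeg i)
  -- basic structure facts
  have hlap : L = G.lapMatrix ℝ := by
    rw [hL, hD, hA]; rfl
  have hDhis : Dhi *ᵥ s = fun _ => 1 := by
    funext i
    rw [hDhi, mulVec_diagonal]
    exact inv_mul_cancel₀ (hs i).ne'
  have hNLs : NL *ᵥ s = 0 := by
    rw [hNL, ← mulVec_mulVec, ← mulVec_mulVec, hDhis, hlap,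
      SimpleGraph.lapMatrix_mulVec_const_eq_zero, mulVec_zero]
  have hNLt : NLᵀ = NL := by
    rw [hNL, hL, hD, hDhi, hA]
    simp [Matrix.transpose_mul, Matrix.transpose_sub, Matrix.diagonal_transpose,
      SimpleGraph.transpose_adjMatrix, Matrix.mul_assoc]
  -- kernel of NL
  have hDhi_apply : ∀ (w : Fin n → ℝ) (k : Fin n), (Dhi *ᵥ w) k = (s k)⁻¹ * w k := by
    intro w k
    rw [hDhi, mulVec_diagonal]
  have hker : ∀ x : Fin n → ℝ, NL *ᵥ x = 0 → ∀ i, x i = ((s v)⁻¹ * x v) * s i := by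
    intro x hx i
    have hx' : Dhi *ᵥ (L *ᵥ (Dhi *ᵥ x)) = 0 := by
      rw [mulVec_mulVec, mulVec_mulVec, ← hNL]
      exact hx
    have hw : L *ᵥ (Dhi *ᵥ x) = 0 := by
      funext k
      have hk := congrFun hx' k
      rw [hDhi_apply, Pi.zero_apply] at hk
      have h2 := (mul_eq_zero.1 hk).resolve_left (inv_ne_zero (hs k).ne')
      simpa using h2
    rw [hlap] at hw
    have hreach := (SimpleGraph.lapMatrix_mulVec_eq_zero_iff_forall_reachable
      (G := G) (x := Dhi *ᵥ x)).1 hw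
    have hc := hreach i v (hG.preconnected i v)
    simp only [hDhi_apply] at hc
    have hxi : x i = s i * ((s i)⁻¹ * x i) := by
      rw [← mul_assoc, mul_inv_cancel₀ (hs i).ne', one_mul]
    rw [hxi, hc]
    ring
  -- X is symmetric
  have hY1 : NL * Xᵀ * NL = NL := by
    have h := congrArg Matrix.transpose hX1
    simpa only [Matrix.transpose_mul, hNLt, Matrix.mul_assoc] using h
  have hY2 : Xᵀ * NL * Xᵀ = Xᵀ := by
    have h := congrArg Matrix.transpose hX2
    simpa only [Matrix.transpose_mul, hNLt, Matrix.mul_assoc] using h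
  have hY3 : (NL * Xᵀ)ᵀ = NL * Xᵀ := by
    have e1 : NL * Xᵀ = (X * NL)ᵀ := by rw [Matrix.transpose_mul, hNLt]
    rw [e1, Matrix.transpose_transpose]
    exact hX4.symm
  have hY4 : (Xᵀ * NL)ᵀ = Xᵀ * NL := by
    have e2 : Xᵀ * NL = (NL * X)ᵀ := by rw [Matrix.transpose_mul, hNLt]
    rw [e2, Matrix.transpose_transpose]
    exact hX3.symm
  have hXt : Xᵀ = X :=
    (mp_unique NL X Xᵀ hX1 hX2 hX3 hX4 hY1 hY2 hY3 hY4).symm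
  have hXuv : X v u = X u v := by
    have h := congrFun (congrFun hXt u) v
    simpa [Matrix.transpose_apply] using h
  have hcomm : NL * X = X * NL := by
    rw [← hX3, Matrix.transpose_mul, hXt, hNLt]
  -- X kills s
  have hQs : (NL * X) *ᵥ s = 0 := by
    rw [hcomm, ← mulVec_mulVec, hNLs, mulVec_zero]
  -- the test vector e
  set e : Fin n → ℝ := (Pi.single u 1 : Fin n → ℝ) - r • (Pi.single v 1 : Fin n → ℝ) with he
  have hrsv : r * s v = s u := by
    rw [hr, hs_def]
    exact div_mul_cancel₀ _ (hs v).ne'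
  have hse : s ⬝ᵥ e = 0 := by
    rw [he, dotProduct_sub, dotProduct_smul, dotProduct_single, dotProduct_single]
    simp only [smul_eq_mul, mul_one]
    rw [hrsv, sub_self]
  -- (NL * X) *ᵥ e = e
  have hNLQ : NL * (NL * X) = NL := by
    rw [hcomm, ← Matrix.mul_assoc, hX1]
  have hQe : (NL * X) *ᵥ e = e := by
    set z : Fin n → ℝ := (NL * X) *ᵥ e - e with hz_def
    have hz : NL *ᵥ z = 0 := by
      rw [hz_def, mulVec_sub, mulVec_mulVec, hNLQ, sub_self]
    have hzc := hker z hz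
    have hsz : s ⬝ᵥ z = 0 := by
      rw [hz_def, dotProduct_sub, dotProduct_mulVec, ← hX3, vecMul_transpose,
        hQs, zero_dotProduct, hse, sub_self]
    have hc0 : (s v)⁻¹ * z v = 0 := by
      have hsum : s ⬝ᵥ z = ((s v)⁻¹ * z v) * ∑ i, s i * s i := by
        rw [dotProduct, Finset.mul_sum]
        exact Finset.sum_congr rfl fun i _ => by rw [hzc i]; ring
      rw [hsum] at hsz
      have hpos : 0 < ∑ i : Fin n, s i * s i :=
        Finset.sum_pos (fun i _ => mul_pos (hs i) (hs i)) ⟨u, Finset.mem_univ u⟩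
      exact (mul_eq_zero.1 hsz).resolve_right hpos.ne'
    have hz0 : z = 0 := funext fun i => by rw [hzc i, hc0, zero_mul]; rfl
    have hz0' : (NL * X) *ᵥ e - e = 0 := by rw [← hz_def]; exact hz0
    exact sub_eq_zero.1 hz0'
  set y : Fin n → ℝ := X *ᵥ e with hy_def
  have hNLy : NL *ᵥ y = e := by rw [hy_def, mulVec_mulVec, hQe]
  set c0 : ℝ := y v / s v with hc0_def
  set yt : Fin n → ℝ := y - c0 • s with hyt_def
  have hNLyt : NL *ᵥ yt = e := by
    rw [hyt_def, mulVec_sub, mulVec_smul, hNLs, smul_zero, sub_zero, hNLy]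
  have hytv : yt v = 0 := by
    rw [hyt_def]
    simp only [Pi.sub_apply, Pi.smul_apply, smul_eq_mul, hc0_def]
    rw [div_mul_cancel₀ _ (hs v).ne', sub_self]
  -- key submatrix-sum lemma
  have key : ∀ xh : Fin n → ℝ, xh v = 0 →
      ∀ w : {w : Fin n // w ≠ v},
        (M *ᵥ fun j : {w : Fin n // w ≠ v} => xh j.1) w = (NL *ᵥ xh) w.1 := by
    intro xh hxv w
    have h1 : ∀ x : Fin n, x ∈ Finset.univ.erase v ↔ x ≠ v := by simp
    calc (M *ᵥ fun j : {w : Fin n // w ≠ v} => xh j.1) w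
        = ∑ j : {w : Fin n // w ≠ v}, NL w.1 j.1 * xh j.1 := by
          simp [Matrix.mulVec, dotProduct, hM, Matrix.submatrix_apply]
    _ = ∑ j ∈ Finset.univ.erase v, NL w.1 j * xh j :=
          (Finset.sum_subtype _ h1 fun j => NL w.1 j * xh j).symm
    _ = ∑ j : Fin n, NL w.1 j * xh j := by
          rw [← Finset.sum_erase_add Finset.univ _ (Finset.mem_univ v), hxv, mul_zero, add_zero]
    _ = (NL *ᵥ xh) w.1 := rfl
  -- invertibility of the principal submatrix
  have hMdet : IsUnit M.det := by
    rw [isUnit_iff_ne_zero]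
    intro hdet
    obtain ⟨x, hx0, hx⟩ := Matrix.exists_mulVec_eq_zero_iff.2 hdet
    set xh : Fin n → ℝ := fun j => if h : j = v then 0 else x ⟨j, h⟩ with hxh_def
    have hxhv : xh v = 0 := by rw [hxh_def]; simp
    have hxx : (fun j : {w : Fin n // w ≠ v} => xh j.1) = x := by
      funext j
      rw [hxh_def]
      exact dif_neg j.2
    have h0 : ∀ w : {w : Fin n // w ≠ v}, (NL *ᵥ xh) w.1 = 0 := by
      intro w
      rw [← key xh hxhv w, hxx, hx]
      rfl
    have hdot : s ⬝ᵥ (NL *ᵥ xh) = 0 := by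
      rw [dotProduct_mulVec, ← hNLt, vecMul_transpose, hNLs, zero_dotProduct]
    have hsum : s ⬝ᵥ (NL *ᵥ xh) = s v * (NL *ᵥ xh) v := by
      rw [dotProduct]
      refine Finset.sum_eq_single v (fun i _ hiv => ?_) (by simp)
      rw [h0 ⟨i, hiv⟩, mul_zero]
    have hv0 : (NL *ᵥ xh) v = 0 := by
      have hsv := hsum ▸ hdot
      exact (mul_eq_zero.1 hsv).resolve_left (hs v).ne'
    have hNLxh : NL *ᵥ xh = 0 := by
      funext i
      by_cases h : i = v
      · rw [h]; exact hv0
      · exact h0 ⟨i, h⟩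
    have hxh0 : ∀ i, xh i = 0 := by
      intro i
      rw [hker xh hNLxh i, hxhv]
      ring
    apply hx0
    funext j
    rw [← hxx]
    exact hxh0 j.1
  -- the matrix equation for the reduced vector
  have hMeq : M *ᵥ (fun j : {w : Fin n // w ≠ v} => yt j.1)
      = Pi.single (⟨u, huv⟩ : {w : Fin n // w ≠ v}) 1 := by
    funext w
    rw [key yt hytv w, hNLyt, he]
    simp only [Pi.sub_apply, Pi.smul_apply, smul_eq_mul]
    rw [Pi.single_apply, Pi.single_apply, Pi.single_apply]
    rw [if_neg w.2, mul_zero, sub_zero]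
    by_cases hwu : (w : Fin n) = u
    · rw [if_pos hwu, if_pos (Subtype.ext hwu)]
    · rw [if_neg hwu, if_neg (fun hc => hwu (congrArg Subtype.val hc))]
  have h5 : M⁻¹ *ᵥ (M *ᵥ fun j : {w : Fin n // w ≠ v} => yt j.1)
      = M⁻¹ *ᵥ Pi.single (⟨u, huv⟩ : {w : Fin n // w ≠ v}) 1 := by rw [hMeq]
  rw [mulVec_mulVec, Matrix.nonsing_inv_mul M hMdet, one_mulVec] at h5
  have hfin : yt u = M⁻¹ ⟨u, huv⟩ ⟨u, huv⟩ := by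
    have h6 := congrFun h5 ⟨u, huv⟩
    rw [mulVec_single] at h6
    simpa using h6
  -- evaluate y
  have hyval : ∀ i, y i = X i u - r * X i v := by
    intro i
    rw [hy_def, he, mulVec_sub, mulVec_smul]
    simp [mulVec_single]
  have hr2 : ((G.degree u : ℝ) / (G.degree v : ℝ)) = r * r := by
    rw [hr, div_mul_div_comm, Real.mul_self_sqrt (by positivity),
      Real.mul_self_sqrt (by positivity)]
  rw [← hfin, hr2]
  have hytu : yt u = y u - (y v / s v) * s u := by
    rw [hyt_def]
    simp [hc0_def]
  rw [hytu, hyval u, hyval v, hXuv, hr]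
  simp only [hs_def]
  ring
end

section
/- Let G be a connected undirected simple graph on n ≥ 2 vertices with Laplacian L and normalized Laplacian 𝓛 = D^{-1/2} L D^{-1/2}. Let L† be the Moore–Penrose pseudoinverse of L and 𝓛† the Moore–Penrose pseudoinverse of 𝓛. Then for any two distinct vertices u and v, with b_{uv} = e_u − e_v, one has b_{uv}ᵀ L† b_{uv} = b_{uv}ᵀ D^{-1/2} 𝓛† D^{-1/2} b_{uv}; that is, the effective resistance between u and v can be computed from the normalized Laplacian pseudoinverse. -/
open Matrix

/-- For a connected simple graph on `n ≥ 2` vertices with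
Laplacian `L` and normalized Laplacian `𝓛 = D^{-1/2} L D^{-1/2}`, if `L†` and
`𝓛†` are the Moore–Penrose pseudoinverses of `L` and `𝓛`, then for distinct
vertices `u, v` and `b = e_u - e_v` one has
`bᵀ L† b = bᵀ D^{-1/2} 𝓛† D^{-1/2} b`. -/
theorem stmt_1
    (n : ℕ) (hn : 2 ≤ n)
    (G : SimpleGraph (Fin n)) [DecidableRel G.Adj] (hG : G.Connected)
    (u v : Fin n) (huv : u ≠ v)
    (A D Dhi L NL Ld NLd : Matrix (Fin n) (Fin n) ℝ)
    (hA : A = G.adjMatrix ℝ)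
    (hD : D = Matrix.diagonal fun i => (G.degree i : ℝ))
    (hDhi : Dhi = Matrix.diagonal fun i => (Real.sqrt (G.degree i))⁻¹)
    (hL : L = D - A)
    (hNL : NL = Dhi * L * Dhi)
    (hLd1 : L * Ld * L = L) (hLd2 : Ld * L * Ld = Ld)
    (hLd3 : (L * Ld)ᵀ = L * Ld) (hLd4 : (Ld * L)ᵀ = Ld * L)
    (hNLd1 : NL * NLd * NL = NL) (hNLd2 : NLd * NL * NLd = NLd)
    (hNLd3 : (NL * NLd)ᵀ = NL * NLd) (hNLd4 : (NLd * NL)ᵀ = NLd * NL)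
    (b : Fin n → ℝ) (hb : b = Pi.single u 1 - Pi.single v 1) :
    b ⬝ᵥ (Ld *ᵥ b) = b ⬝ᵥ ((Dhi * NLd * Dhi) *ᵥ b) := by
  haveI : Nontrivial (Fin n) := Fin.nontrivial_iff_two_le.mpr hn
  -- positive degrees
  have hdeg : ∀ i : Fin n, 0 < (G.degree i : ℝ) := by
    intro i
    obtain ⟨j, hj⟩ := exists_ne i
    obtain ⟨p⟩ := hG.preconnected i j
    have hadj : ∃ w, G.Adj i w := by
      cases p with
      | nil => exact (hj rfl).elim
      | cons h _ => exact ⟨_, h⟩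
    exact_mod_cast (G.degree_pos_iff_exists_adj i).mpr hadj
  set d : Fin n → ℝ := fun i => Real.sqrt (G.degree i) with hdd
  have hd0 : ∀ i, d i ≠ 0 := fun i => ne_of_gt (Real.sqrt_pos.mpr (hdeg i))
  set Ds : Matrix (Fin n) (Fin n) ℝ := Matrix.diagonal d with hDs
  have hDsDhi : Ds * Dhi = 1 := by
    rw [hDhi, hDs, diagonal_mul_diagonal]
    rw [show (fun i => d i * (Real.sqrt (G.degree i))⁻¹) = fun _ => (1:ℝ) from
      funext fun i => mul_inv_cancel₀ (hd0 i), diagonal_one]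
  have hDhiDs : Dhi * Ds = 1 := by
    rw [hDhi, hDs, diagonal_mul_diagonal]
    rw [show (fun i => (Real.sqrt (G.degree i))⁻¹ * d i) = fun _ => (1:ℝ) from
      funext fun i => inv_mul_cancel₀ (hd0 i), diagonal_one]
  have hDsDs : Ds * Ds = D := by
    have h : (fun i => d i * d i) = fun i => ((G.degree i : ℝ)) :=
      funext fun i => Real.mul_self_sqrt (le_of_lt (hdeg i))
    rw [hDs, hD, diagonal_mul_diagonal, h]
  have hLsym : Lᵀ = L := by
    rw [hL, hD, hA, transpose_sub, diagonal_transpose, SimpleGraph.transpose_adjMatrix]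
  have hDhisym : Dhiᵀ = Dhi := by rw [hDhi, diagonal_transpose]
  have hNLsym : NLᵀ = NL := by
    rw [hNL]; simp [transpose_mul, hDhisym, hLsym, Matrix.mul_assoc]
  have hLNL : L = Ds * NL * Ds := by
    rw [hNL]
    have h : Ds * (Dhi * L * Dhi) * Ds = (Ds * Dhi) * (L * (Dhi * Ds)) := by
      simp only [Matrix.mul_assoc]
    rw [h, hDsDhi, hDhiDs, Matrix.one_mul, Matrix.mul_one]
  have hLDhi : L * Dhi = Ds * NL := by
    rw [hLNL]
    have h : Ds * NL * Ds * Dhi = Ds * NL * (Ds * Dhi) := by simp only [Matrix.mul_assoc]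
    rw [h, hDsDhi, Matrix.mul_one]
  have hLlap : L = G.lapMatrix ℝ := by
    rw [hL, hD, hA, SimpleGraph.lapMatrix, SimpleGraph.degMatrix]
  -- kernel of L is the constants
  have hker : ∀ z : Fin n → ℝ, L *ᵥ z = 0 → ∃ c : ℝ, z = fun _ => c := by
    intro z hz
    have h := (G.lapMatrix_mulVec_eq_zero_iff_forall_reachable (x := z)).mp
      (by rw [← hLlap]; exact hz)
    exact ⟨z ⟨0, by omega⟩, funext fun i => h i _ (hG.preconnected i _)⟩
  have hconst : ∀ c : ℝ, L *ᵥ (fun _ => c) = 0 := by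
    intro c
    have h1 := G.lapMatrix_mulVec_const_eq_zero (R := ℝ)
    have h2 : (fun _ : Fin n => c) = c • (fun _ : Fin n => (1:ℝ)) := by funext i; simp
    rw [hLlap, h2, Matrix.mulVec_smul, h1, smul_zero]
  set onev : Fin n → ℝ := fun _ => 1 with honev
  have hsb : ∑ i, b i = 0 := by
    simp [hb, Pi.sub_apply, Finset.sum_sub_distrib, Pi.single_apply]
  have hdotL : ∀ y : Fin n → ℝ, onev ⬝ᵥ (L *ᵥ y) = 0 := by
    intro y
    rw [dotProduct_mulVec]
    have h : onev ᵥ* L = 0 := by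
      rw [← mulVec_transpose, hLsym]; exact hconst 1
    rw [h, zero_dotProduct]
  -- kernel of NL
  have hkerNL : ∀ z : Fin n → ℝ, NL *ᵥ z = 0 → ∃ c : ℝ, z = Ds *ᵥ (fun _ => c) := by
    intro z hz
    have h1 : L *ᵥ (Dhi *ᵥ z) = 0 := by
      rw [mulVec_mulVec, hLDhi, ← mulVec_mulVec, hz, Matrix.mulVec_zero]
    obtain ⟨c, hc⟩ := hker _ h1
    refine ⟨c, ?_⟩
    have h2 : z = Ds *ᵥ (Dhi *ᵥ z) := by
      rw [mulVec_mulVec, hDsDhi, Matrix.one_mulVec]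
    rw [h2, hc]
  -- Step A : L *ᵥ (Ld *ᵥ b) = b
  have hLLLd : L * (L * Ld) = L := by
    have h := congrArg Matrix.transpose hLd1
    rwa [Matrix.transpose_mul, hLd3, hLsym] at h
  set w : Fin n → ℝ := Ld *ᵥ b with hw
  have hAw : L *ᵥ w = b := by
    have h1 : L *ᵥ (L *ᵥ w) = L *ᵥ b := by
      rw [hw, mulVec_mulVec, mulVec_mulVec, Matrix.mul_assoc L L Ld, hLLLd]
    have h2 : L *ᵥ (L *ᵥ w - b) = 0 := by
      rw [Matrix.mulVec_sub, h1, sub_self]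
    obtain ⟨c, hc⟩ := hker _ h2
    have h3 : onev ⬝ᵥ (L *ᵥ w - b) = (n : ℝ) * c := by
      rw [hc]; simp [honev, dotProduct, mul_comm]
    rw [dotProduct_sub, hdotL, honev] at h3
    simp only [dotProduct, one_mul] at h3
    rw [hsb, sub_zero] at h3
    have hn0 : (n : ℝ) ≠ 0 := by positivity
    have hcz : c = 0 := by
      rcases mul_eq_zero.mp h3.symm with h | h
      · exact absurd h hn0
      · exact h
    have h4 : L *ᵥ w - b = 0 := by rw [hc, hcz]; funext i; simp
    exact sub_eq_zero.mp h4
  -- Step B : L *ᵥ x = b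
  have hNLNL : NL * (NL * NLd) = NL := by
    have h := congrArg Matrix.transpose hNLd1
    rwa [Matrix.transpose_mul, hNLd3, hNLsym] at h
  set y : Fin n → ℝ := Dhi *ᵥ b with hy
  set q : Fin n → ℝ := (NL * NLd) *ᵥ y with hq
  have hNLt : NL *ᵥ (q - y) = 0 := by
    have h1 : NL *ᵥ q = NL *ᵥ y := by
      rw [hq, mulVec_mulVec, hNLNL]
    rw [Matrix.mulVec_sub, h1, sub_self]
  obtain ⟨c, hc⟩ := hkerNL _ hNLt
  set x : Fin n → ℝ := (Dhi * NLd * Dhi) *ᵥ b with hx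
  have hM : L * (Dhi * NLd * Dhi) = Ds * (NL * NLd) * Dhi := by
    calc L * (Dhi * NLd * Dhi) = (L * Dhi) * NLd * Dhi := by simp only [Matrix.mul_assoc]
    _ = Ds * NL * NLd * Dhi := by rw [hLDhi]
    _ = Ds * (NL * NLd) * Dhi := by simp only [Matrix.mul_assoc]
  have hLx0 : L *ᵥ x = Ds *ᵥ q := by
    rw [hx, mulVec_mulVec, hM, hq, hy, mulVec_mulVec, mulVec_mulVec]
  have hqyb : Ds *ᵥ q = b + D *ᵥ (fun _ => c) := by
    have h2 : Ds *ᵥ y = b := by rw [hy, mulVec_mulVec, hDsDhi, Matrix.one_mulVec]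
    have h3 : Ds *ᵥ (q - y) = D *ᵥ (fun _ => c) := by
      rw [hc, mulVec_mulVec, hDsDs]
    have h4 := Matrix.mulVec_sub Ds q y
    rw [← h2, ← h3, h4]
    abel
  have hsum_pos : 0 < ∑ i, (G.degree i : ℝ) :=
    Finset.sum_pos (fun i _ => hdeg i) Finset.univ_nonempty
  have h5 : onev ⬝ᵥ (D *ᵥ (fun _ => c)) = c * ∑ i, (G.degree i : ℝ) := by
    simp only [hD, dotProduct, mulVec_diagonal, honev, one_mul]
    rw [← Finset.sum_mul, mul_comm]
  have h6 : onev ⬝ᵥ (L *ᵥ x) = 0 := hdotL x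
  rw [hLx0, hqyb, dotProduct_add, h5] at h6
  have h7 : onev ⬝ᵥ b = 0 := by
    simp only [honev, dotProduct, one_mul]; exact hsb
  rw [h7, zero_add] at h6
  have hcz : c = 0 := by
    rcases mul_eq_zero.mp h6 with h | h
    · exact h
    · exact absurd h (ne_of_gt hsum_pos)
  have hLxb : L *ᵥ x = b := by
    rw [hLx0, hqyb, hcz]
    have h8 : (fun _ : Fin n => (0:ℝ)) = 0 := rfl
    rw [h8, Matrix.mulVec_zero, add_zero]
  -- Step C
  have hC : L *ᵥ (w - x) = 0 := by rw [Matrix.mulVec_sub, hAw, hLxb, sub_self]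
  obtain ⟨c', hc'⟩ := hker _ hC
  have hbc : b ⬝ᵥ (w - x) = 0 := by
    simp only [hc', dotProduct]
    rw [← Finset.sum_mul, hsb, zero_mul]
  rw [dotProduct_sub] at hbc
  linarith
end

section
/- Let s, s*, s̃ be vectors in ℝ^N, let 0 ≤ ε_wd ≤ 1 and ε_p ≥ 0. Suppose (i) ‖s − s*‖₂ ≤ ε_wd · ‖s‖₂; (ii) s̃ is obtained from s* by replacing some of its coordinates by zero (i.e., for every index i, s̃_i = s*_i or s̃_i = 0); and (iii) ‖s* − s̃‖₁ ≤ ε_p · ‖s*‖₁. Then ‖s‖₂² − ‖s̃‖₂² ≤ (2ε_wd − ε_wd² + ε_p² · N · (1 + ε_wd)²) · ‖s‖₂². -/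
open Matrix

/-- error bound from Theorem 4.4 of the paper.  If
`‖s - s*‖₂ ≤ ε_wd ‖s‖₂`, `s̃` is obtained from `s*` by zeroing some
coordinates, and `‖s* - s̃‖₁ ≤ ε_p ‖s*‖₁`, then
`‖s‖₂² - ‖s̃‖₂² ≤ (2ε_wd - ε_wd² + ε_p² N (1+ε_wd)²) ‖s‖₂²`. -/
theorem stmt_8
    (N : ℕ) (s sstar stil : Fin N → ℝ) (εwd εp : ℝ)
    (hwd0 : 0 ≤ εwd) (hwd1 : εwd ≤ 1) (hp0 : 0 ≤ εp)
    (h1 : Real.sqrt (∑ i, (s i - sstar i) ^ 2) ≤ εwd * Real.sqrt (∑ i, (s i) ^ 2))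
    (h2 : ∀ i, stil i = sstar i ∨ stil i = 0)
    (h3 : (∑ i, |sstar i - stil i|) ≤ εp * ∑ i, |sstar i|) :
    (∑ i, (s i) ^ 2) - (∑ i, (stil i) ^ 2) ≤
      (2 * εwd - εwd ^ 2 + εp ^ 2 * N * (1 + εwd) ^ 2) * ∑ i, (s i) ^ 2 := by
  set A2 := ∑ i, (s i) ^ 2 with hA2def
  set B2 := ∑ i, (sstar i) ^ 2 with hB2def
  have hA2nn : 0 ≤ A2 := Finset.sum_nonneg fun i _ => sq_nonneg _
  have hB2nn : 0 ≤ B2 := Finset.sum_nonneg fun i _ => sq_nonneg _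
  -- euclidean space vectors
  let u : EuclideanSpace ℝ (Fin N) := WithLp.toLp 2 fun i => s i
  let v : EuclideanSpace ℝ (Fin N) := WithLp.toLp 2 fun i => sstar i
  have hnu : ‖u‖ = Real.sqrt A2 := by
    rw [EuclideanSpace.norm_eq]
    congr 1
    exact Finset.sum_congr rfl fun i _ => by rw [Real.norm_eq_abs, sq_abs]
  have hnv : ‖v‖ = Real.sqrt B2 := by
    rw [EuclideanSpace.norm_eq]
    congr 1
    exact Finset.sum_congr rfl fun i _ => by rw [Real.norm_eq_abs, sq_abs]
  have hnd : ‖u - v‖ = Real.sqrt (∑ i, (s i - sstar i) ^ 2) := by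
    rw [EuclideanSpace.norm_eq]
    congr 1
    exact Finset.sum_congr rfl fun i _ => by
      have : (u - v) i = s i - sstar i := rfl
      rw [this, Real.norm_eq_abs, sq_abs]
  have h1' : ‖u - v‖ ≤ εwd * ‖u‖ := by rw [hnd, hnu]; exact h1
  have hup : ‖v‖ ≤ (1 + εwd) * ‖u‖ := by
    have tri : ‖v‖ ≤ ‖u‖ + ‖u - v‖ := by
      calc ‖v‖ = ‖u - (u - v)‖ := by rw [sub_sub_cancel]
        _ ≤ ‖u‖ + ‖u - v‖ := norm_sub_le _ _
    nlinarith [norm_nonneg u]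
  have hlo : (1 - εwd) * ‖u‖ ≤ ‖v‖ := by
    have tri : ‖u‖ - ‖v‖ ≤ ‖u - v‖ := norm_sub_norm_le u v
    nlinarith
  -- squared versions
  have hsqA : ‖u‖ ^ 2 = A2 := by rw [hnu, Real.sq_sqrt hA2nn]
  have hsqB : ‖v‖ ^ 2 = B2 := by rw [hnv, Real.sq_sqrt hB2nn]
  have hBup : B2 ≤ (1 + εwd) ^ 2 * A2 := by
    have := pow_le_pow_left₀ (norm_nonneg v) hup 2
    rw [hsqB, mul_pow, hsqA] at this
    exact this
  have hBlo : (1 - εwd) ^ 2 * A2 ≤ B2 := by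
    have h0 : (0:ℝ) ≤ (1 - εwd) * ‖u‖ := by
      have := norm_nonneg u; nlinarith
    have := pow_le_pow_left₀ h0 hlo 2
    rw [hsqB, mul_pow, hsqA] at this
    exact this
  -- sparsification part
  set D2 := ∑ i, (sstar i - stil i) ^ 2 with hD2def
  set D1 := ∑ i, |sstar i - stil i| with hD1def
  set L1 := ∑ i, |sstar i| with hL1def
  have hsplit : B2 = D2 + ∑ i, (stil i) ^ 2 := by
    rw [hB2def, hD2def, ← Finset.sum_add_distrib]
    exact Finset.sum_congr rfl fun i _ => by
      rcases h2 i with h | h <;> rw [h] <;> ring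
  have hD2le : D2 ≤ D1 ^ 2 := by
    have : D2 = ∑ i, |sstar i - stil i| ^ 2 :=
      Finset.sum_congr rfl fun i _ => (sq_abs _).symm
    rw [this]
    exact Finset.sum_sq_le_sq_sum_of_nonneg fun i _ => abs_nonneg _
  have hD1sq : D1 ^ 2 ≤ εp ^ 2 * L1 ^ 2 := by
    have hD1nn : 0 ≤ D1 := Finset.sum_nonneg fun i _ => abs_nonneg _
    have := pow_le_pow_left₀ hD1nn h3 2
    rw [mul_pow] at this
    exact this
  have hL1sq : L1 ^ 2 ≤ N * B2 := by
    have := sq_sum_le_card_mul_sum_sq (s := Finset.univ) (f := fun i => |sstar i|)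
    simpa [sq_abs] using this
  have hD2fin : D2 ≤ εp ^ 2 * N * (1 + εwd) ^ 2 * A2 := by
    have hεp2 : (0:ℝ) ≤ εp ^ 2 := sq_nonneg _
    have hN : (0:ℝ) ≤ (N:ℝ) := Nat.cast_nonneg _
    calc D2 ≤ D1 ^ 2 := hD2le
      _ ≤ εp ^ 2 * L1 ^ 2 := hD1sq
      _ ≤ εp ^ 2 * (N * B2) := mul_le_mul_of_nonneg_left hL1sq hεp2
      _ ≤ εp ^ 2 * (N * ((1 + εwd) ^ 2 * A2)) := by
          exact mul_le_mul_of_nonneg_left (mul_le_mul_of_nonneg_left hBup hN) hεp2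
      _ = εp ^ 2 * N * (1 + εwd) ^ 2 * A2 := by ring
  nlinarith [hsplit, hBlo, hD2fin]
end

section
/- Let G be a connected undirected simple graph on n ≥ 2 vertices with Laplacian L, let λ₂ be the second-smallest eigenvalue of L, and let Δ be the diameter of G. Then λ₂ ≥ 4/(n·Δ). -/
open Matrix Finset
open scoped RealInnerProductSpace

lemma walk_telescope {n : ℕ} {G : SimpleGraph (Fin n)} (v : Fin n → ℝ)
    {a b : Fin n} (p : G.Walk a b) :
    (p.darts.map fun d => v d.toProd.1 - v d.toProd.2).sum = v a - v b := by
  induction p with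
  | nil => simp
  | cons h q ih =>
    simp only [SimpleGraph.Walk.darts_cons, List.map_cons, List.sum_cons, ih]
    ring

-- sum over path-pairs is at most the full Laplacian quadratic form sum / 2
lemma path_pairs_le {n : ℕ} (G : SimpleGraph (Fin n)) [DecidableRel G.Adj] (v : Fin n → ℝ)
    {a b : Fin n} (p : G.Walk a b) (hp : p.IsPath) :
    ∑ q ∈ (p.darts.map SimpleGraph.Dart.toProd).toFinset, (v q.1 - v q.2) ^ 2
      ≤ (∑ i, ∑ j, if G.Adj i j then (v i - v j) ^ 2 else 0) / 2 := by
  classical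
  set t : Finset (Fin n × Fin n) := (p.darts.map SimpleGraph.Dart.toProd).toFinset with ht
  set F : Fin n × Fin n → ℝ := fun q => if G.Adj q.1 q.2 then (v q.1 - v q.2) ^ 2 else 0 with hF
  have hmem : ∀ q ∈ t, ∃ d ∈ p.darts, d.toProd = q := by
    intro q hq
    simpa [ht, List.mem_map] using hq
  have hadj : ∀ q ∈ t, G.Adj q.1 q.2 := by
    intro q hq
    obtain ⟨d, _, rfl⟩ := hmem q hq
    exact d.adj
  have hFt : ∀ q ∈ t, (v q.1 - v q.2) ^ 2 = F q := by
    intro q hq; simp [hF, hadj q hq]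
  have hed : p.edges.Nodup := hp.edges_nodup
  have hdisj : Disjoint t (t.image Prod.swap) := by
    rw [Finset.disjoint_left]
    rintro q hq hq2
    have hq2' : q.swap ∈ t := by
      obtain ⟨r, hr, hrq⟩ := Finset.mem_image.mp hq2
      simpa [← hrq] using hr
    obtain ⟨d, hd, rfl⟩ := hmem _ hq
    obtain ⟨d', hd', hd'e⟩ := hmem _ hq2'
    have he : d'.edge = d.edge := by
      rw [SimpleGraph.Dart.edge, SimpleGraph.Dart.edge, hd'e]
      exact Sym2.mk_prod_swap_eq
    have : d' = d := by
      have hnd : (p.darts.map SimpleGraph.Dart.edge).Nodup := by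
        rw [← SimpleGraph.Walk.edges]; exact hed
      exact List.inj_on_of_nodup_map hnd hd' hd he
    rw [this] at hd'e
    have : d.toProd.1 = d.toProd.2 := by
      have := congrArg Prod.fst hd'e
      simpa [Prod.swap] using this.symm
    exact G.irrefl (this ▸ d.adj)
  have hswap : ∑ q ∈ t.image Prod.swap, F q = ∑ q ∈ t, F q := by
    rw [Finset.sum_image (by intro x _ y _ h; exact Prod.swap_injective h)]
    refine Finset.sum_congr rfl fun q hq => ?_
    simp only [hF, Prod.fst_swap, Prod.snd_swap]
    rw [if_pos (hadj q hq).symm, if_pos (hadj q hq)]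
    ring
  have hsub : t ∪ t.image Prod.swap ⊆ Finset.univ := Finset.subset_univ _
  have hFnn : ∀ q, 0 ≤ F q := by intro q; simp only [hF]; positivity
  have hle : ∑ q ∈ t ∪ t.image Prod.swap, F q ≤ ∑ q : Fin n × Fin n, F q :=
    Finset.sum_le_sum_of_subset_of_nonneg hsub (fun q _ _ => hFnn q)
  rw [Finset.sum_union hdisj, hswap] at hle
  have htot : ∑ q : Fin n × Fin n, F q = ∑ i, ∑ j, if G.Adj i j then (v i - v j) ^ 2 else 0 := by
    rw [← Finset.sum_product']
    rfl
  rw [Finset.sum_congr rfl hFt]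
  linarith [hle, htot ▸ hle]

/-- eigenvalue lower bound, used in Theorem 5.6 of the
paper.  For a connected simple graph on `n ≥ 2` vertices with Laplacian `L`,
second-smallest eigenvalue `λ₂` and diameter `Δ`, one has `λ₂ ≥ 4/(nΔ)`. -/
theorem stmt_16
    (n : ℕ) (hn : 2 ≤ n)
    (G : SimpleGraph (Fin n)) [DecidableRel G.Adj] (hG : G.Connected)
    (A D L : Matrix (Fin n) (Fin n) ℝ)
    (hA : A = G.adjMatrix ℝ)
    (hD : D = Matrix.diagonal fun i => (G.degree i : ℝ))
    (hL : L = D - A)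
    (hH : L.IsHermitian)
    (σ : Equiv.Perm (Fin n)) (hσ : Monotone fun i => hH.eigenvalues (σ i))
    (lam2 : ℝ) (hlam2 : lam2 = hH.eigenvalues (σ ⟨1, by omega⟩))
    (Δ : ℕ) (hΔ : Δ = Finset.univ.sup fun p : Fin n × Fin n => G.dist p.1 p.2) :
    4 / ((n : ℝ) * (Δ : ℝ)) ≤ lam2 := by
  classical
  have hLlap : L = G.lapMatrix ℝ := by
    rw [hL, hD, hA]; rfl
  have hpsd : (G.lapMatrix ℝ).PosSemidef := SimpleGraph.posSemidef_lapMatrix ℝ G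
  -- eigenvalues are nonneg
  have heignn : ∀ i, 0 ≤ hH.eigenvalues i := by
    intro i
    have := hLlap ▸ hpsd
    exact this.eigenvalues_nonneg i
  have hlam2nn : 0 ≤ lam2 := hlam2 ▸ heignn _
  -- lam2 ≠ 0
  have hlam2ne : lam2 ≠ 0 := by
    intro h0
    have h1 : hH.eigenvalues (σ ⟨1, by omega⟩) = 0 := by rw [← hlam2, h0]
    have h0' : hH.eigenvalues (σ ⟨0, by omega⟩) = 0 := by
      have hle : hH.eigenvalues (σ ⟨0, by omega⟩) ≤ hH.eigenvalues (σ ⟨1, by omega⟩) :=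
        hσ (by exact Fin.mk_le_mk.mpr (by omega))
      have := heignn (σ ⟨0, by omega⟩)
      linarith [h1 ▸ hle]
    -- both eigenvectors are in kernel hence constant
    have hconst : ∀ (k : Fin n), hH.eigenvalues k = 0 →
        ∀ i j : Fin n, (hH.eigenvectorBasis k) i = (hH.eigenvectorBasis k) j := by
      intro k hk i j
      have hmv : L *ᵥ ⇑(hH.eigenvectorBasis k) = 0 := by
        rw [hH.mulVec_eigenvectorBasis, hk, zero_smul]
      have : Matrix.toLin' (G.lapMatrix ℝ) ⇑(hH.eigenvectorBasis k) = 0 := by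
        rw [Matrix.toLin'_apply, ← hLlap, hmv]
      exact ((SimpleGraph.lapMatrix_mulVec_eq_zero_iff_forall_reachable (G := G)).mp
        (by rwa [Matrix.toLin'_apply] at this)) i j (hG.preconnected i j)
    have hne01 : σ ⟨0, by omega⟩ ≠ σ ⟨1, by omega⟩ := by
      intro h
      have := σ.injective h
      simp at this
    have horth : inner (𝕜 := ℝ) (hH.eigenvectorBasis (σ ⟨0, by omega⟩))
        (hH.eigenvectorBasis (σ ⟨1, by omega⟩)) = (0 : ℝ) :=
      hH.eigenvectorBasis.orthonormal.2 hne01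
    have hinner : inner (𝕜 := ℝ) (hH.eigenvectorBasis (σ ⟨0, by omega⟩))
        (hH.eigenvectorBasis (σ ⟨1, by omega⟩)) =
        ∑ i, (hH.eigenvectorBasis (σ ⟨0, by omega⟩)) i *
          (hH.eigenvectorBasis (σ ⟨1, by omega⟩)) i := by
      rw [PiLp.inner_apply]; exact Finset.sum_congr rfl fun i _ => by simp [mul_comm]
    set w0 := hH.eigenvectorBasis (σ ⟨0, by omega⟩) with hw0
    set w1 := hH.eigenvectorBasis (σ ⟨1, by omega⟩) with hw1
    have hz : (⟨0, by omega⟩ : Fin n) = ⟨0, by omega⟩ := rfl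
    have hc0 : ∀ i, w0 i = w0 ⟨0, by omega⟩ := fun i => hconst _ h0' i _
    have hc1 : ∀ i, w1 i = w1 ⟨0, by omega⟩ := fun i => hconst _ h1 i _
    have hval : ∑ i, w0 i * w1 i = (n : ℝ) * (w0 ⟨0, by omega⟩ * w1 ⟨0, by omega⟩) := by
      have h5 : ∀ i ∈ Finset.univ, w0 i * w1 i = w0 ⟨0, by omega⟩ * w1 ⟨0, by omega⟩ :=
        fun i _ => by rw [hc0 i, hc1 i]
      rw [Finset.sum_congr rfl h5, Finset.sum_const, Finset.card_univ, Fintype.card_fin,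
        nsmul_eq_mul]
    have hw0ne : w0 ⟨0, by omega⟩ ≠ 0 := by
      intro h
      have : w0 = 0 := by
        ext i
        rw [hc0 i, h]; rfl
      exact hH.eigenvectorBasis.orthonormal.ne_zero _ this
    have hw1ne : w1 ⟨0, by omega⟩ ≠ 0 := by
      intro h
      have : w1 = 0 := by
        ext i
        rw [hc1 i, h]; rfl
      exact hH.eigenvectorBasis.orthonormal.ne_zero _ this
    rw [hinner, hval] at horth
    have hnne : (n : ℝ) ≠ 0 := by positivity
    exact (mul_ne_zero hw0ne hw1ne) (by
      rcases mul_eq_zero.mp horth with h | h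
      · exact absurd h hnne
      · exact h)
  -- the eigenvector for lam2
  set v : Fin n → ℝ := ⇑(hH.eigenvectorBasis (σ ⟨1, by omega⟩)) with hv
  have hmv : L *ᵥ v = lam2 • v := by rw [hlam2]; exact hH.mulVec_eigenvectorBasis _
  have hvne : v ≠ 0 := by
    intro h
    exact hH.eigenvectorBasis.orthonormal.ne_zero (σ ⟨1, by omega⟩)
      (by ext i; exact congrFun h i)
  set S : ℝ := ∑ i, v i ^ 2 with hS
  have hSpos : 0 < S := by
    obtain ⟨k, hk⟩ := Function.ne_iff.mp hvne
    have h1 : 0 < v k ^ 2 := lt_of_le_of_ne (sq_nonneg _) (Ne.symm (pow_ne_zero 2 hk))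
    exact lt_of_lt_of_le h1 (Finset.single_le_sum (f := fun i => v i ^ 2)
      (fun i _ => sq_nonneg _) (Finset.mem_univ k))
  -- quadratic form value
  have hQ : (∑ i, ∑ j, if G.Adj i j then (v i - v j) ^ 2 else 0) / 2 = lam2 * S := by
    have h1 := SimpleGraph.lapMatrix_toLinearMap₂' ℝ G v
    rw [Matrix.toLinearMap₂'_apply'] at h1
    rw [← h1, ← hLlap, hmv]
    simp only [dotProduct, Pi.smul_apply, smul_eq_mul, hS]
    rw [Finset.mul_sum]
    exact Finset.sum_congr rfl fun i _ => by ring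
  -- entries of v sum to zero
  have hsum : ∑ i, v i = 0 := by
    have h1 : (fun _ => (1 : ℝ)) ⬝ᵥ (L *ᵥ v) = lam2 * ∑ i, v i := by
      rw [hmv]; simp only [dotProduct, Pi.smul_apply, smul_eq_mul, one_mul]
      rw [Finset.mul_sum]
    have h2 : (fun _ => (1 : ℝ)) ⬝ᵥ (L *ᵥ v) = 0 := by
      rw [Matrix.dotProduct_mulVec, ← Matrix.mulVec_transpose]
      have hsymm : Lᵀ = L := by rw [hLlap]; exact SimpleGraph.isSymm_lapMatrix (R := ℝ) (G := G)
      rw [hsymm, hLlap, SimpleGraph.lapMatrix_mulVec_const_eq_zero]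
      exact zero_dotProduct v
    rw [h1] at h2
    exact (mul_eq_zero.mp h2).resolve_left hlam2ne
  -- max and min entries
  obtain ⟨a, -, ha⟩ := Finset.exists_max_image Finset.univ v ⟨⟨0, by omega⟩, Finset.mem_univ _⟩
  obtain ⟨b, -, hb⟩ := Finset.exists_min_image Finset.univ v ⟨⟨0, by omega⟩, Finset.mem_univ _⟩
  have hquad : S + (n : ℝ) * (v a * v b) ≤ 0 := by
    have hterm : ∀ i ∈ Finset.univ, (v i - v a) * (v i - v b) ≤ 0 := fun i _ =>
      mul_nonpos_iff.mpr (Or.inr ⟨sub_nonpos.mpr (ha i (Finset.mem_univ i)),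
        sub_nonneg.mpr (hb i (Finset.mem_univ i))⟩)
    have hsnp := Finset.sum_nonpos hterm
    have hexp : ∑ i, (v i - v a) * (v i - v b) = S + (n : ℝ) * (v a * v b) := by
      have h3 : ∀ i ∈ Finset.univ, (v i - v a) * (v i - v b)
          = v i ^ 2 - (v a + v b) * v i + v a * v b := fun i _ => by ring
      rw [Finset.sum_congr rfl h3]
      rw [Finset.sum_add_distrib, Finset.sum_sub_distrib, ← Finset.mul_sum, hsum,
        Finset.sum_const, Finset.card_univ, Fintype.card_fin, nsmul_eq_mul, ← hS]
      ring
    linarith [hexp ▸ hsnp]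
  have hnR : (2 : ℝ) ≤ (n : ℝ) := by exact_mod_cast hn
  have key2 : 4 * S ≤ (n : ℝ) * (v a - v b) ^ 2 := by
    nlinarith [mul_nonneg (by linarith : (0:ℝ) ≤ (n:ℝ)) (sq_nonneg (v a + v b)), hquad]
  have hab : a ≠ b := by
    intro h
    rw [h] at key2
    simp only [sub_self] at key2
    nlinarith
  -- shortest path
  have hdist0 : G.dist a b ≠ 0 :=
    SimpleGraph.dist_ne_zero_iff_ne_and_reachable.mpr ⟨hab, hG.preconnected a b⟩
  obtain ⟨p, hp, hplen⟩ := hG.exists_path_of_dist a b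
  have hdle : G.dist a b ≤ Δ := by
    rw [hΔ]
    exact Finset.le_sup (f := fun q : Fin n × Fin n => G.dist q.1 q.2) (Finset.mem_univ (a, b))
  have hΔ1 : 1 ≤ Δ := le_trans (Nat.one_le_iff_ne_zero.mpr hdist0) hdle
  set t : Finset (Fin n × Fin n) := (p.darts.map SimpleGraph.Dart.toProd).toFinset with ht
  have hnd : (p.darts.map SimpleGraph.Dart.toProd).Nodup :=
    (SimpleGraph.Walk.darts_nodup_of_support_nodup hp.support_nodup).map
      SimpleGraph.Dart.toProd_injective
  have hcard : (t.card : ℝ) ≤ (Δ : ℝ) := by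
    have h4 : t.card = p.length := by
      rw [ht, List.toFinset_card_of_nodup hnd, List.length_map, SimpleGraph.Walk.length_darts]
    rw [h4]
    exact_mod_cast hplen ▸ hdle
  have htele : ∑ q ∈ t, (v q.1 - v q.2) = v a - v b := by
    rw [ht, List.sum_toFinset _ hnd, List.map_map]
    exact walk_telescope v p
  have hcs : (v a - v b) ^ 2 ≤ (t.card : ℝ) * ∑ q ∈ t, (v q.1 - v q.2) ^ 2 := by
    rw [← htele]
    exact sq_sum_le_card_mul_sum_sq
  have hpq := path_pairs_le G v p hp
  rw [hQ] at hpq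
  have htnn : (0 : ℝ) ≤ ∑ q ∈ t, (v q.1 - v q.2) ^ 2 :=
    Finset.sum_nonneg fun q _ => sq_nonneg _
  have key1 : (v a - v b) ^ 2 ≤ (Δ : ℝ) * (lam2 * S) := by
    calc (v a - v b) ^ 2 ≤ (t.card : ℝ) * ∑ q ∈ t, (v q.1 - v q.2) ^ 2 := hcs
      _ ≤ (Δ : ℝ) * (lam2 * S) := mul_le_mul hcard hpq htnn (by positivity)
  have hΔR : (1 : ℝ) ≤ (Δ : ℝ) := by exact_mod_cast hΔ1
  have hnpos : (0 : ℝ) < (n : ℝ) := by linarith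
  have hΔpos : (0 : ℝ) < (Δ : ℝ) := by linarith
  rw [div_le_iff₀ (mul_pos hnpos hΔpos)]
  have c1 : (n : ℝ) * (v a - v b) ^ 2 ≤ (n : ℝ) * ((Δ : ℝ) * (lam2 * S)) :=
    mul_le_mul_of_nonneg_left key1 hnpos.le
  have c2 : 4 * S ≤ (lam2 * ((n : ℝ) * (Δ : ℝ))) * S := by
    calc 4 * S ≤ (n : ℝ) * (v a - v b) ^ 2 := key2
      _ ≤ (n : ℝ) * ((Δ : ℝ) * (lam2 * S)) := c1
      _ = (lam2 * ((n : ℝ) * (Δ : ℝ))) * S := by ring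
  exact (mul_le_mul_iff_left₀ hSpos).mp c2
end
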